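/- arXiv:1502.03729 — 4 statements merged into one kernel-verified Lean document; each statement's English description precedes it below -/
import Mathlib

section
/- Let F, Θ be N×N complex matrices, G an N×M complex matrix, H an M×N complex matrix, F_c, P₃ be N_c×N_c complex matrices, G_c an N_c×M complex matrix, H_c an M×N_c complex matrix, L a p×M complex matrix, and C a 1×N complex matrix. Assume: (i) Θ and P₃ are Hermitian; (ii) FΘ + ΘF† + GG† = 0 and G = −ΘH† (plant physical realizability); (iii) F_cP₃ + P₃F_c† + G_cG_c† − (G_c + P₃H_c†) L† L (G_c + P₃H_c†)† = 0. Define the augmented matrices F_a = [[F, 0], [G_cH, F_c]], G_a = [G; G_c], H_a = [H H_c], and P̃ = diag(Θ, P₃). Then P̃ satisfies the augmented algebraic Riccati equation F_aP̃ + P̃F_a† + G_aG_a† − (G_a + P̃H_a†) L† L (G_a + P̃H_a†)† = 0, and the corresponding estimation error cost satisfies [C 0] P̃ [C 0]† = CΘC†. -/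
/-!
Physical realizability `G = -Θ H†` makes the plant rows of the augmented gain `G_a + P̃ H_a†`
vanish, and together with `Θ = Θ†` (so that `H Θ = -G†`) it also cancels the off-diagonal
blocks of the augmented residual. Hence the augmented Riccati residual at `diag(Θ, P₃)` is
`diag(plant Lyapunov residual, controller Riccati residual)`, and the cost `[C 0] P̃ [C 0]†`
only sees the block `Θ`.
-/

open Matrix

section Riccati

variable {α : Type*} [Ring α] [StarRing α] {n m p nc : Type*}
  [Fintype n] [Fintype m] [Fintype p] [Fintype nc]

def riccatiResidual (F : Matrix n n α) (G : Matrix n m α) (H : Matrix m n α)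
    (L : Matrix p m α) (P : Matrix n n α) : Matrix n n α :=
  F * P + P * Fᴴ + G * Gᴴ - (G + P * Hᴴ) * Lᴴ * L * (G + P * Hᴴ)ᴴ

theorem riccatiResidual_cascade_fromBlocks (F Θ : Matrix n n α) (G : Matrix n m α)
    (H : Matrix m n α) (Fc P : Matrix nc nc α) (Gc : Matrix nc m α) (Hc : Matrix m nc α)
    (L : Matrix p m α) (hΘ : Θ.IsHermitian) (hG : G = -(Θ * Hᴴ)) :
    riccatiResidual (fromBlocks F 0 (Gc * H) Fc) (fromRows G Gc) (fromCols H Hc) L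
        (fromBlocks Θ 0 0 P) =
      fromBlocks (F * Θ + Θ * Fᴴ + G * Gᴴ) 0 0 (riccatiResidual Fc Gc Hc L P) := by
  have hHΘ : H * Θ = -Gᴴ := by
    rw [hG, conjTranspose_neg, conjTranspose_mul, conjTranspose_conjTranspose, hΘ.eq, neg_neg]
  have hgain : fromRows G Gc + fromBlocks Θ 0 0 P * (fromCols H Hc)ᴴ =
      fromRows 0 (Gc + P * Hcᴴ) := by
    ext (i | i) j <;> simp [conjTranspose_fromCols_eq_fromRows_conjTranspose,
      fromBlocks_mul_fromRows, hG]
  rw [riccatiResidual, hgain, sub_eq_add_neg, conjTranspose_fromRows_eq_fromCols_conjTranspose,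
    conjTranspose_fromRows_eq_fromCols_conjTranspose, fromRows_mul_fromCols, fromRows_mul,
    fromRows_mul, fromRows_mul_fromCols, fromBlocks_conjTranspose, fromBlocks_multiply,
    fromBlocks_multiply, fromBlocks_neg, fromBlocks_add, fromBlocks_add, fromBlocks_add]
  congr 1
  · simp
  · simp [conjTranspose_mul, ← Matrix.mul_assoc, hG]
  · simp [Matrix.mul_assoc, hHΘ]
  · simp [riccatiResidual, sub_eq_add_neg]

theorem fromCols_zero_mul_fromBlocks_mul_conjTranspose {l : Type*} (C : Matrix l n α)
    (Θ : Matrix n n α) (B : Matrix n nc α) (B' : Matrix nc n α) (P : Matrix nc nc α) :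
    fromCols C (0 : Matrix l nc α) * fromBlocks Θ B B' P * (fromCols C (0 : Matrix l nc α))ᴴ =
      C * Θ * Cᴴ := by
  rw [conjTranspose_fromCols_eq_fromRows_conjTranspose, fromCols_mul_fromBlocks,
    fromCols_mul_fromRows]
  simp

end Riccati

theorem coherent_classical_no_feedback_cost_general
    (N M Nc p : ℕ)
    (F Θ : Matrix (Fin N) (Fin N) ℂ)
    (G : Matrix (Fin N) (Fin M) ℂ)
    (H : Matrix (Fin M) (Fin N) ℂ)
    (Fc P₃ : Matrix (Fin Nc) (Fin Nc) ℂ)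
    (Gc : Matrix (Fin Nc) (Fin M) ℂ)
    (Hc : Matrix (Fin M) (Fin Nc) ℂ)
    (L : Matrix (Fin p) (Fin M) ℂ)
    (C : Matrix (Fin 1) (Fin N) ℂ)
    (hΘ : Θ.IsHermitian)
    (h1 : F * Θ + Θ * Fᴴ + G * Gᴴ = 0)
    (h2 : G = -(Θ * Hᴴ))
    (h3 : Fc * P₃ + P₃ * Fcᴴ + Gc * Gcᴴ -
      (Gc + P₃ * Hcᴴ) * Lᴴ * L * (Gc + P₃ * Hcᴴ)ᴴ = 0) :
    let Fa : Matrix (Fin N ⊕ Fin Nc) (Fin N ⊕ Fin Nc) ℂ :=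
      Matrix.fromBlocks F 0 (Gc * H) Fc
    let Ga : Matrix (Fin N ⊕ Fin Nc) (Fin M) ℂ := Matrix.fromRows G Gc
    let Ha : Matrix (Fin M) (Fin N ⊕ Fin Nc) ℂ := Matrix.fromCols H Hc
    let Pt : Matrix (Fin N ⊕ Fin Nc) (Fin N ⊕ Fin Nc) ℂ :=
      Matrix.fromBlocks Θ 0 0 P₃
    Fa * Pt + Pt * Faᴴ + Ga * Gaᴴ -
      (Ga + Pt * Haᴴ) * Lᴴ * L * (Ga + Pt * Haᴴ)ᴴ = 0 ∧
    Matrix.fromCols C (0 : Matrix (Fin 1) (Fin Nc) ℂ) * Pt * (Matrix.fromCols C (0 : Matrix (Fin 1) (Fin Nc) ℂ))ᴴ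
      = C * Θ * Cᴴ := by
  intro Fa Ga Ha Pt
  refine ⟨?_, fromCols_zero_mul_fromBlocks_mul_conjTranspose C Θ 0 0 P₃⟩
  have hc : riccatiResidual Fc Gc Hc L P₃ = 0 := h3
  have h := riccatiResidual_cascade_fromBlocks F Θ G H Fc P₃ Gc Hc L hΘ h2
  rw [h1, hc, fromBlocks_zero] at h
  exact h

/-- Algebraic core of the paper's Theorem 3: the block-diagonal
matrix diag(Θ, P₃) solves the augmented Riccati equation for the
coherent-classical estimation scheme without feedback, and the
coherent-classical cost equals the purely-classical cost CΘC†. -/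
theorem coherent_classical_no_feedback_cost
    (N M Nc p : ℕ)
    (F Θ : Matrix (Fin N) (Fin N) ℂ)
    (G : Matrix (Fin N) (Fin M) ℂ)
    (H : Matrix (Fin M) (Fin N) ℂ)
    (Fc P₃ : Matrix (Fin Nc) (Fin Nc) ℂ)
    (Gc : Matrix (Fin Nc) (Fin M) ℂ)
    (Hc : Matrix (Fin M) (Fin Nc) ℂ)
    (L : Matrix (Fin p) (Fin M) ℂ)
    (C : Matrix (Fin 1) (Fin N) ℂ)
    (hΘ : Θ.IsHermitian) (hP₃ : P₃.IsHermitian)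
    (h1 : F * Θ + Θ * Fᴴ + G * Gᴴ = 0)
    (h2 : G = -(Θ * Hᴴ))
    (h3 : Fc * P₃ + P₃ * Fcᴴ + Gc * Gcᴴ -
      (Gc + P₃ * Hcᴴ) * Lᴴ * L * (Gc + P₃ * Hcᴴ)ᴴ = 0) :
    let Fa : Matrix (Fin N ⊕ Fin Nc) (Fin N ⊕ Fin Nc) ℂ :=
      Matrix.fromBlocks F 0 (Gc * H) Fc
    let Ga : Matrix (Fin N ⊕ Fin Nc) (Fin M) ℂ := Matrix.fromRows G Gc
    let Ha : Matrix (Fin M) (Fin N ⊕ Fin Nc) ℂ := Matrix.fromCols H Hc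
    let Pt : Matrix (Fin N ⊕ Fin Nc) (Fin N ⊕ Fin Nc) ℂ :=
      Matrix.fromBlocks Θ 0 0 P₃
    Fa * Pt + Pt * Faᴴ + Ga * Gaᴴ -
      (Ga + Pt * Haᴴ) * Lᴴ * L * (Ga + Pt * Haᴴ)ᴴ = 0 ∧
    Matrix.fromCols C (0 : Matrix (Fin 1) (Fin Nc) ℂ) * Pt * (Matrix.fromCols C (0 : Matrix (Fin 1) (Fin Nc) ℂ))ᴴ
      = C * Θ * Cᴴ :=
  coherent_classical_no_feedback_cost_general N M Nc p F Θ G H Fc P₃ Gc Hc L C hΘ h1 h2 h3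
end

section
/- Let F, Θ be N×N complex matrices, G₁ and G₂ be N×M complex matrices, and H an M×N complex matrix. Assume Θ is Hermitian, FΘ + ΘF† + G₁G₁† + G₂G₂† = 0, and G₁ = −ΘH†. Then the closed-loop matrices satisfy (F + G₂H)Θ + Θ(F + G₂H)† + (G₁ + G₂)(G₁ + G₂)† = 0. -/
open Matrix

/-! The closed-loop expression is the open-loop one plus the cross terms
`G₂ (H Θ + G₁ᴴ) + (Θ Hᴴ + G₁) G₂ᴴ`, and the realizability condition `G₁ = -Θ Hᴴ` with `Θ`
Hermitian makes both brackets vanish. -/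

theorem closedLoop_lyapunov_eq_openLoop_add_cross {m n R : Type*} [Fintype m] [Fintype n]
    [Ring R] [StarRing R] (F Θ : Matrix m m R) (G₁ G₂ : Matrix m n R) (H : Matrix n m R) :
    (F + G₂ * H) * Θ + Θ * (F + G₂ * H)ᴴ + (G₁ + G₂) * (G₁ + G₂)ᴴ =
      (F * Θ + Θ * Fᴴ + G₁ * G₁ᴴ + G₂ * G₂ᴴ) + G₂ * (H * Θ + G₁ᴴ) + (Θ * Hᴴ + G₁) * G₂ᴴ := by
  simp only [conjTranspose_add, conjTranspose_mul, Matrix.add_mul, Matrix.mul_add,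
    Matrix.mul_assoc]
  abel

/-- The (1,1)-block identity in the proof of the paper's
Theorem 4: the closed-loop plant matrices satisfy the Lyapunov-type
physical-realizability relation with the same commutation matrix Θ. -/
theorem closed_loop_lyapunov_identity
    (N M : ℕ)
    (F Θ : Matrix (Fin N) (Fin N) ℂ)
    (G₁ G₂ : Matrix (Fin N) (Fin M) ℂ)
    (H : Matrix (Fin M) (Fin N) ℂ)
    (hΘ : Θ.IsHermitian)
    (h1 : F * Θ + Θ * Fᴴ + G₁ * G₁ᴴ + G₂ * G₂ᴴ = 0)
    (h2 : G₁ = -(Θ * Hᴴ)) :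
    (F + G₂ * H) * Θ + Θ * (F + G₂ * H)ᴴ + (G₁ + G₂) * (G₁ + G₂)ᴴ = 0 := by
  have hG₁ : H * Θ + G₁ᴴ = 0 := by
    rw [h2, conjTranspose_neg, conjTranspose_mul, conjTranspose_conjTranspose, hΘ.eq,
      add_neg_cancel]
  have hG₁' : Θ * Hᴴ + G₁ = 0 := by rw [h2, add_neg_cancel]
  rw [closedLoop_lyapunov_eq_openLoop_add_cross, h1, hG₁, hG₁', Matrix.mul_zero, Matrix.zero_mul, add_zero,
    add_zero]
end

section
/- Let Θ be an N×N complex matrix, G₁, G₂ be N×M complex matrices, G_{c1}, G_{c2} be N_c×M complex matrices, Θ_c an N_c×N_c complex matrix, and H̃_c an M×N_c complex matrix with G_{c1} = −Θ_cH̃_c†. Define the augmented matrices G_a = [[G₁ + G₂, 0], [G_{c2}, G_{c1}]] (2×2 block matrix), K_a = [0 I] (block row with identity in the second block), H_a = [0 H̃_c] (block row), and P̃ = diag(Θ, Θ_c). Then G_aK_a† + P̃H_a† = 0. -/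
open Matrix

namespace Matrix

variable {R l m₁ m₂ n n₁ n₂ : Type*}

theorem fromRows_add [Add R] (A₁ B₁ : Matrix m₁ n R) (A₂ B₂ : Matrix m₂ n R) :
    fromRows A₁ A₂ + fromRows B₁ B₂ = fromRows (A₁ + B₁) (A₂ + B₂) := by
  ext (_ | _) _ <;> rfl

variable [Semiring R] [StarRing R] [Fintype n₁] [Fintype n₂]

theorem fromBlocks_mul_conjTranspose_fromCols_zero_one [DecidableEq n₂]
    (A : Matrix m₁ n₁ R) (B : Matrix m₁ n₂ R) (C : Matrix m₂ n₁ R) (D : Matrix m₂ n₂ R) :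
    fromBlocks A B C D * (fromCols (0 : Matrix n₂ n₁ R) (1 : Matrix n₂ n₂ R))ᴴ =
      fromRows B D := by
  rw [conjTranspose_fromCols_eq_fromRows_conjTranspose, fromBlocks_mul_fromRows]
  simp

theorem fromBlocks_zero_zero_mul_conjTranspose_fromCols_zero
    (A : Matrix m₁ n₁ R) (D : Matrix m₂ n₂ R) (H : Matrix l n₂ R) :
    fromBlocks A 0 0 D * (fromCols (0 : Matrix l n₁ R) H)ᴴ = fromRows 0 (D * Hᴴ) := by
  rw [conjTranspose_fromCols_eq_fromRows_conjTranspose, fromBlocks_mul_fromRows]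
  simp

end Matrix

/-- The Kalman gain numerator of the augmented plant-controller
system with coherent feedback vanishes at P̃ = diag(Θ, Θ_c). -/
theorem feedback_kalman_gain_numerator_zero
    (N M Nc : ℕ)
    (Θ : Matrix (Fin N) (Fin N) ℂ)
    (G₁ G₂ : Matrix (Fin N) (Fin M) ℂ)
    (Gc1 Gc2 : Matrix (Fin Nc) (Fin M) ℂ)
    (Θc : Matrix (Fin Nc) (Fin Nc) ℂ)
    (Htc : Matrix (Fin M) (Fin Nc) ℂ)
    (h : Gc1 = -(Θc * Htcᴴ)) :
    let Ga : Matrix (Fin N ⊕ Fin Nc) (Fin M ⊕ Fin M) ℂ :=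
      Matrix.fromBlocks (G₁ + G₂) 0 Gc2 Gc1
    let Ka : Matrix (Fin M) (Fin M ⊕ Fin M) ℂ :=
      Matrix.fromCols 0 (1 : Matrix (Fin M) (Fin M) ℂ)
    let Ha : Matrix (Fin M) (Fin N ⊕ Fin Nc) ℂ := Matrix.fromCols 0 Htc
    let Pt : Matrix (Fin N ⊕ Fin Nc) (Fin N ⊕ Fin Nc) ℂ :=
      Matrix.fromBlocks Θ 0 0 Θc
    Ga * Kaᴴ + Pt * Haᴴ = 0 := by
  intro Ga Ka Ha Pt
  have hGK : Ga * Kaᴴ = fromRows 0 Gc1 := fromBlocks_mul_conjTranspose_fromCols_zero_one ..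
  have hPH : Pt * Haᴴ = fromRows 0 (Θc * Htcᴴ) :=
    fromBlocks_zero_zero_mul_conjTranspose_fromCols_zero ..
  rw [hGK, hPH, fromRows_add, h, add_zero, neg_add_cancel, fromRows_zero]
end

section
/- Let F, Θ be N×N complex matrices, G₁, G₂ be N×M complex matrices, H an M×N complex matrix, F_c, Θ_c be N_c×N_c complex matrices, G_{c1}, G_{c2} be N_c×M complex matrices, H_c, H̃_c be M×N_c complex matrices, and C a 1×N complex matrix. Assume: (i) Θ and Θ_c are Hermitian; (ii) FΘ + ΘF† + G₁G₁† + G₂G₂† = 0 and G₁ = −ΘH† (plant physical realizability); (iii) F_cΘ_c + Θ_cF_c† + G_{c1}G_{c1}† + G_{c2}G_{c2}† = 0, G_{c1} = −Θ_cH̃_c†, and G_{c2} = −Θ_cH_c† (controller physical realizability). Define F_a = [[F + G₂H, G₂H_c], [G_{c2}H, F_c]], G_a = [[G₁ + G₂, 0], [G_{c2}, G_{c1}]], H_a = [0 H̃_c], K_a = [0 I], and P̃ = diag(Θ, Θ_c). Then F_aP̃ + P̃F_a† + G_aG_a† = 0 and G_aK_a† + P̃H_a† = 0; in particular, for every p×M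 complex matrix L, P̃ satisfies the augmented algebraic Riccati equation F_aP̃ + P̃F_a† + G_aG_a† − (G_aK_a† + P̃H_a†) L† L (G_aK_a† + P̃H_a†)† = 0, and the estimation error cost satisfies [C 0] P̃ [C 0]† = CΘC†. -/
open Matrix

/-!
Plant and controller each satisfy their own Lyapunov identity, and physical realizability
(`G = -Θ Hᴴ`) says precisely that the terms created by closing the feedback loop cancel against
the cross terms of the noise covariance. Hence `diag(Θ, Θc)` solves the augmented Lyapunov
equation, and its cross-correlation term `Ga Kaᴴ + P̃ Haᴴ` vanishes, so the Riccati correction is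
zero whatever the measured quadrature `L`. The block structure of `diag(Θ, Θc)` then reduces the
cost to `C Θ Cᴴ`.
-/

namespace Matrix

variable {α : Type*} [Ring α] [StarRing α]
variable {l m n o : Type*} [Fintype m] [Fintype n] [Fintype o]

def lyapunov (F P : Matrix n n α) (G : Matrix n m α) : Matrix n n α :=
  F * P + P * Fᴴ + G * Gᴴ

theorem lyapunov_fromBlocks [Fintype l] {A P : Matrix n n α} {B : Matrix n o α}
    {C : Matrix o n α} {D Q : Matrix o o α} {E : Matrix n m α} {G : Matrix o m α} {K : Matrix o l α}
    (hP : P.IsHermitian) (hQ : Q.IsHermitian) :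
    lyapunov (fromBlocks A B C D) (fromBlocks P 0 0 Q) (fromBlocks E 0 G K) =
      fromBlocks (lyapunov A P E) (B * Q + P * Cᴴ + E * Gᴴ)
        (B * Q + P * Cᴴ + E * Gᴴ)ᴴ (lyapunov D Q G + K * Kᴴ) := by
  simp only [lyapunov, fromBlocks_conjTranspose, fromBlocks_multiply, fromBlocks_add,
    conjTranspose_add, conjTranspose_mul, conjTranspose_zero, conjTranspose_conjTranspose,
    hP.eq, hQ.eq, Matrix.mul_zero, Matrix.zero_mul, add_zero, zero_add]
  congr 1 <;> abel

theorem lyapunov_add_feedback {F Θ : Matrix n n α} {G₁ G₂ : Matrix n m α} {H : Matrix m n α}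
    (hΘ : Θ.IsHermitian) (hG₁ : G₁ = -(Θ * Hᴴ)) :
    lyapunov (F + G₂ * H) Θ (G₁ + G₂) = lyapunov F Θ G₁ + G₂ * G₂ᴴ := by
  subst hG₁
  simp only [lyapunov, conjTranspose_add, conjTranspose_neg, conjTranspose_mul,
    conjTranspose_conjTranspose, hΘ.eq, Matrix.add_mul, Matrix.mul_add, Matrix.neg_mul,
    Matrix.mul_neg, Matrix.mul_assoc]
  abel

theorem feedback_cross_term_eq_zero {Θ : Matrix n n α} {Θc : Matrix o o α}
    {G₁ G₂ : Matrix n m α} {H : Matrix m n α} {Gc2 : Matrix o m α} {Hc : Matrix m o α}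
    (hΘc : Θc.IsHermitian) (hG₁ : G₁ = -(Θ * Hᴴ)) (hGc2 : Gc2 = -(Θc * Hcᴴ)) :
    G₂ * Hc * Θc + Θ * (Gc2 * H)ᴴ + (G₁ + G₂) * Gc2ᴴ = 0 := by
  subst hG₁ hGc2
  simp only [conjTranspose_mul, conjTranspose_neg, conjTranspose_conjTranspose, hΘc.eq,
    Matrix.add_mul, Matrix.mul_neg, Matrix.neg_mul, Matrix.mul_assoc]
  abel

theorem fromBlocks_mul_fromCols_zero_one_conjTranspose_add_eq_zero [Fintype l] [DecidableEq m]
    {A : Matrix n l α} {B : Matrix o l α} {D : Matrix o m α} {P : Matrix n n α}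
    {Q : Matrix o o α} {X : Matrix m o α} (hD : D = -(Q * Xᴴ)) :
    fromBlocks A 0 B D * (fromCols (0 : Matrix m l α) (1 : Matrix m m α))ᴴ +
      fromBlocks P 0 0 Q * (fromCols (0 : Matrix m n α) X)ᴴ = 0 := by
  subst hD
  simp only [conjTranspose_fromCols_eq_fromRows_conjTranspose, fromBlocks_mul_fromRows,
    conjTranspose_zero, conjTranspose_one, Matrix.mul_zero, Matrix.zero_mul, Matrix.mul_one,
    zero_add]
  ext (_ | _) _ <;> simp

theorem fromCols_zero_mul_fromBlocks_mul_conjTranspose {C : Matrix l n α}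
    {P : Matrix n n α} {R : Matrix n o α} {S : Matrix o n α} {Q : Matrix o o α} :
    fromCols C (0 : Matrix l o α) * fromBlocks P R S Q * (fromCols C (0 : Matrix l o α))ᴴ =
      C * P * Cᴴ := by
  simp only [conjTranspose_fromCols_eq_fromRows_conjTranspose, fromCols_mul_fromBlocks,
    fromCols_mul_fromRows, conjTranspose_zero, Matrix.mul_zero, Matrix.zero_mul, add_zero]

end Matrix

/-- Algebraic core of the paper's Theorem 4: with coherent
feedback and both plant and controller physically realizable
annihilation-operator-only systems, P̃ = diag(Θ, Θ_c) solves the augmented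
Riccati equation and the coherent-classical cost equals the purely-classical
cost CΘC†. -/
theorem coherent_classical_feedback_cost
    (N M Nc p : ℕ)
    (F Θ : Matrix (Fin N) (Fin N) ℂ)
    (G₁ G₂ : Matrix (Fin N) (Fin M) ℂ)
    (H : Matrix (Fin M) (Fin N) ℂ)
    (Fc Θc : Matrix (Fin Nc) (Fin Nc) ℂ)
    (Gc1 Gc2 : Matrix (Fin Nc) (Fin M) ℂ)
    (Hc Htc : Matrix (Fin M) (Fin Nc) ℂ)
    (C : Matrix (Fin 1) (Fin N) ℂ)
    (hΘ : Θ.IsHermitian) (hΘc : Θc.IsHermitian)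
    (h1 : F * Θ + Θ * Fᴴ + G₁ * G₁ᴴ + G₂ * G₂ᴴ = 0)
    (h2 : G₁ = -(Θ * Hᴴ))
    (h3 : Fc * Θc + Θc * Fcᴴ + Gc1 * Gc1ᴴ + Gc2 * Gc2ᴴ = 0)
    (h4 : Gc1 = -(Θc * Htcᴴ))
    (h5 : Gc2 = -(Θc * Hcᴴ)) :
    let Fa : Matrix (Fin N ⊕ Fin Nc) (Fin N ⊕ Fin Nc) ℂ :=
      Matrix.fromBlocks (F + G₂ * H) (G₂ * Hc) (Gc2 * H) Fc
    let Ga : Matrix (Fin N ⊕ Fin Nc) (Fin M ⊕ Fin M) ℂ :=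
      Matrix.fromBlocks (G₁ + G₂) 0 Gc2 Gc1
    let Ha : Matrix (Fin M) (Fin N ⊕ Fin Nc) ℂ := Matrix.fromCols 0 Htc
    let Ka : Matrix (Fin M) (Fin M ⊕ Fin M) ℂ :=
      Matrix.fromCols 0 (1 : Matrix (Fin M) (Fin M) ℂ)
    let Pt : Matrix (Fin N ⊕ Fin Nc) (Fin N ⊕ Fin Nc) ℂ :=
      Matrix.fromBlocks Θ 0 0 Θc
    (Fa * Pt + Pt * Faᴴ + Ga * Gaᴴ = 0 ∧ Ga * Kaᴴ + Pt * Haᴴ = 0) ∧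
    (∀ L : Matrix (Fin p) (Fin M) ℂ,
      Fa * Pt + Pt * Faᴴ + Ga * Gaᴴ -
        (Ga * Kaᴴ + Pt * Haᴴ) * Lᴴ * L * (Ga * Kaᴴ + Pt * Haᴴ)ᴴ = 0) ∧
    Matrix.fromCols C (0 : Matrix (Fin 1) (Fin Nc) ℂ) * Pt * (Matrix.fromCols C (0 : Matrix (Fin 1) (Fin Nc) ℂ))ᴴ
      = C * Θ * Cᴴ := by
  intro Fa Ga Ha Ka Pt
  have hLyapunov : Fa * Pt + Pt * Faᴴ + Ga * Gaᴴ = 0 := by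
    change lyapunov Fa Pt Ga = 0
    have hPlant : lyapunov F Θ G₁ + G₂ * G₂ᴴ = 0 := h1
    have hController : lyapunov Fc Θc Gc2 + Gc1 * Gc1ᴴ = 0 := by
      rw [← h3, lyapunov]
      abel
    rw [lyapunov_fromBlocks hΘ hΘc, lyapunov_add_feedback hΘ h2,
      feedback_cross_term_eq_zero hΘc h2 h5, hPlant, hController, conjTranspose_zero,
      fromBlocks_zero]
  have hGain : Ga * Kaᴴ + Pt * Haᴴ = 0 :=
    fromBlocks_mul_fromCols_zero_one_conjTranspose_add_eq_zero h4
  refine ⟨⟨hLyapunov, hGain⟩, fun L => ?_, fromCols_zero_mul_fromBlocks_mul_conjTranspose⟩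
  rw [hLyapunov, hGain, Matrix.zero_mul, Matrix.zero_mul, Matrix.zero_mul, sub_zero]
end
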